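/- Let B₁ = {(0,0)} and W₁ = {(1,0),(0,1),(1,1)} in ℝ². Then for every v ∈ ℝ, (−h(B₁ ⊕ W̌₁, u_v))⁺ = (min(cos v, sin v))⁺, and ∫₀^{2π} (−h(B₁ ⊕ W̌₁, u_v))⁺ dv = 2 − √2. -/

import Mathlib

open Pointwise MeasureTheory

noncomputable section

/-- The plane `ℝ²`. -/
abbrev E2 := EuclideanSpace ℝ (Fin 2)

/-- The point `(x, y)` of `ℝ²`. -/
def pt (x y : ℝ) : E2 := (WithLp.equiv 2 (Fin 2 → ℝ)).symm ![x, y]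

/-- The support function `h(A, n) = sup_{y ∈ A} ⟨y, n⟩`. -/
def suppFn (A : Set E2) (n : E2) : ℝ := sSup ((fun y => (inner ℝ y n : ℝ)) '' A)

/-- The unit vector `u_v = (cos v, sin v)`. -/
def uv (v : ℝ) : E2 := pt (Real.cos v) (Real.sin v)

/-- Black pixels of the configuration `ξ₁` (class `η₂`). -/
def B1 : Set E2 := {pt 0 0}

/-- White pixels of the configuration `ξ₁`. -/
def W1 : Set E2 := {pt 1 0, pt 0 1, pt 1 1}

/-!
`B₁ ⊕ W̌₁ = {(-1,0), (0,-1), (-1,-1)}`, so `-h(B₁ ⊕ W̌₁, u_v) = min(cos v, sin v, cos v + sin v)`,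
whose positive part is that of `min(cos v, sin v)`. The latter vanishes outside `[0, π/2]` and
equals `sin v` on `[0, π/4]` and `cos v` on `[π/4, π/2]`, each piece contributing `1 - √2/2`.
-/

open Real

lemma pt_zero_zero : pt 0 0 = 0 := by
  ext i; fin_cases i <;> simp [pt]

lemma neg_pt (a b : ℝ) : -pt a b = pt (-a) (-b) := by
  ext i; fin_cases i <;> simp [pt]

lemma inner_pt (a b c d : ℝ) : inner ℝ (pt a b) (pt c d) = a * c + b * d := by
  simp [pt, EuclideanSpace.inner_eq_star_dotProduct]
  ring

lemma B1_add_neg_W1 : B1 + -W1 = {pt (-1) 0, pt 0 (-1), pt (-1) (-1)} := by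
  simp [B1, W1, pt_zero_zero, Set.singleton_add, neg_pt]

lemma suppFn_B1_add_neg_W1 (v : ℝ) :
    suppFn (B1 + -W1) (uv v) = -min (cos v) (min (sin v) (cos v + sin v)) := by
  simp only [suppFn, B1_add_neg_W1, uv, Set.image_insert_eq, Set.image_singleton, inner_pt]
  rw [csSup_insert (Set.toFinite _).bddAbove (Set.insert_nonempty _ _), csSup_pair,
    ← max_neg_neg, ← max_neg_neg]
  ring_nf

lemma max_min_min_add_zero {α : Type*} [AddCommGroup α] [LinearOrder α] [IsOrderedAddMonoid α]
    (a b : α) : max (min a (min b (a + b))) 0 = max (min a b) 0 := by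
  rcases le_total 0 a with ha | ha <;> rcases le_total 0 b with hb | hb
  · rw [min_eq_left (le_add_of_nonneg_left ha : b ≤ a + b)]
  all_goals
    have hab : min a b ≤ 0 := min_le_iff.2 (by tauto)
    rw [max_eq_right hab, max_eq_right ((min_le_min_left a (min_le_left _ _)).trans hab)]

lemma sin_le_cos_of_mem_Icc {v : ℝ} (hv : v ∈ Set.Icc 0 (π / 4)) : sin v ≤ cos v := by
  obtain ⟨h0, h1⟩ := hv
  rw [← sin_pi_div_two_sub]
  exact strictMonoOn_sin.monotoneOn ⟨by linarith [pi_pos], by linarith⟩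
    ⟨by linarith, by linarith⟩ (by linarith)

lemma min_cos_sin_nonpos_of_mem_Icc {v : ℝ} (hv : v ∈ Set.Icc (π / 2) (2 * π)) :
    min (cos v) (sin v) ≤ 0 := by
  obtain ⟨h0, h1⟩ := hv
  rcases le_total v π with hπ | hπ
  · exact min_le_of_left_le (cos_nonpos_of_pi_div_two_le_of_le h0 (by linarith))
  · refine min_le_of_right_le ?_
    have := sin_nonneg_of_nonneg_of_le_pi (x := v - π) (by linarith) (by linarith)
    rw [sin_sub_pi] at this
    linarith

lemma max_min_cos_sin_pi_div_two_sub (v : ℝ) :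
    max (min (cos (π / 2 - v)) (sin (π / 2 - v))) 0 = max (min (cos v) (sin v)) 0 := by
  rw [cos_pi_div_two_sub, sin_pi_div_two_sub, min_comm]

lemma integral_max_min_cos_sin_zero_pi_div_four :
    ∫ v in (0 : ℝ)..π / 4, max (min (cos v) (sin v)) 0 = 1 - √2 / 2 := by
  have hπ := pi_pos
  rw [intervalIntegral.integral_congr (g := sin), integral_sin, cos_pi_div_four, cos_zero]
  intro v hv
  rw [Set.uIcc_of_le (by linarith)] at hv
  have hsin : 0 ≤ sin v := sin_nonneg_of_nonneg_of_le_pi hv.1 (by linarith [hv.2])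
  simp only [min_eq_right (sin_le_cos_of_mem_Icc hv), max_eq_left hsin]

lemma integral_max_min_cos_sin_pi_div_four_pi_div_two :
    ∫ v in π / 4..π / 2, max (min (cos v) (sin v)) 0 = 1 - √2 / 2 := by
  have h := intervalIntegral.integral_comp_sub_left
    (fun v => max (min (cos v) (sin v)) 0) (a := 0) (b := π / 4) (π / 2)
  simp only [max_min_cos_sin_pi_div_two_sub, sub_zero] at h
  rw [show π / 2 - π / 4 = π / 4 by ring] at h
  rw [← h, integral_max_min_cos_sin_zero_pi_div_four]

lemma integral_max_min_cos_sin_pi_div_two_two_pi :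
    ∫ v in π / 2..2 * π, max (min (cos v) (sin v)) 0 = 0 := by
  rw [intervalIntegral.integral_congr (g := fun _ => 0), intervalIntegral.integral_zero]
  intro v hv
  rw [Set.uIcc_of_le (by linarith [pi_pos])] at hv
  exact max_eq_right (min_cos_sin_nonpos_of_mem_Icc hv)

lemma integral_max_min_cos_sin :
    ∫ v in (0 : ℝ)..2 * π, max (min (cos v) (sin v)) 0 = 2 - √2 := by
  have hint (a b : ℝ) : IntervalIntegrable (fun v => max (min (cos v) (sin v)) 0) volume a b :=
    ((continuous_cos.min continuous_sin).max continuous_const).intervalIntegrable a b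
  rw [← intervalIntegral.integral_add_adjacent_intervals (hint 0 (π / 2)) (hint _ _),
    ← intervalIntegral.integral_add_adjacent_intervals (hint 0 (π / 4)) (hint _ _),
    integral_max_min_cos_sin_zero_pi_div_four, integral_max_min_cos_sin_pi_div_four_pi_div_two,
    integral_max_min_cos_sin_pi_div_two_two_pi]
  ring

/-- From the proof of Theorem 3: `(−h(B₁ ⊕ W̌₁, u_v))⁺ = (min(cos v, sin v))⁺` for all `v`,
and its integral over `[0, 2π]` equals `2 − √2`. -/
theorem stmt_9 :
    (∀ v : ℝ, max (-(suppFn (B1 + -W1) (uv v))) 0 = max (min (Real.cos v) (Real.sin v)) 0) ∧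
      ∫ v in (0 : ℝ)..(2 * Real.pi), max (-(suppFn (B1 + -W1) (uv v))) 0 =
        2 - Real.sqrt 2 := by
  have hpt (v : ℝ) :
      max (-(suppFn (B1 + -W1) (uv v))) 0 = max (min (Real.cos v) (Real.sin v)) 0 := by
    rw [suppFn_B1_add_neg_W1, neg_neg, max_min_min_add_zero]
  refine ⟨hpt, ?_⟩
  simp only [hpt]
  exact integral_max_min_cos_sin
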